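/- arXiv:1303.0087 — 4 statements merged into one kernel-verified Lean document; each statement's English description precedes it below -/
import Mathlib

section
/- Suppose u, v : Ω → ℝ are C³ functions on an open set Ω ⊆ ℝ² satisfying the lightcone wave map system u_{xy} = u_x u_y/(u+v), v_{xy} = v_x v_y/(u+v), with u + v nowhere zero on Ω and ∂v/∂y nowhere zero on Ω. Then the two functions β₁ = (∂u/∂y)(∂v/∂y)/(u+v) and β₃ = (∂²v/∂y²)/(∂v/∂y) − (∂u/∂y)/(u+v) have identically vanishing partial derivative with respect to x on Ω; that is, β₁ and β₃ are first integrals of the x-characteristic system of the lightcone wave map system. -/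
/-- Partial derivative with respect to the first variable `x`. -/
noncomputable def pdx (f : ℝ × ℝ → ℝ) (p : ℝ × ℝ) : ℝ :=
  deriv (fun x => f (x, p.2)) p.1

/-- Partial derivative with respect to the second variable `y`. -/
noncomputable def pdy (f : ℝ × ℝ → ℝ) (p : ℝ × ℝ) : ℝ :=
  deriv (fun y => f (p.1, y)) p.2

/-!
Differentiating `β₁` in `x` and substituting both equations gives zero at once. For `β₃` the
only new term is `v_{yyx}`: by symmetry of mixed partials it equals `∂_y (v_{xy})`, which the
equation for `v` turns into an expression in derivatives of order at most two, after which
`∂_x β₃` vanishes identically.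
-/

open Filter Topology

theorem ContDiffAt.eventually_differentiableAt {𝕜 E F : Type*} [NontriviallyNormedField 𝕜]
    [NormedAddCommGroup E] [NormedSpace 𝕜 E] [NormedAddCommGroup F] [NormedSpace 𝕜 F]
    {f : E → F} {x : E} {n : WithTop ℕ∞} (hf : ContDiffAt 𝕜 n f x) (hn : 1 ≤ n) :
    ∀ᶠ y in 𝓝 x, DifferentiableAt 𝕜 f y :=
  ((hf.of_le hn).eventually (by simp)).mono fun _ hy => hy.differentiableAt one_ne_zero

section PartialDerivatives

variable {f g : ℝ × ℝ → ℝ} {p : ℝ × ℝ}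

theorem hasDerivAt_pdx (hf : DifferentiableAt ℝ f p) :
    HasDerivAt (fun x => f (x, p.2)) (pdx f p) p.1 :=
  (DifferentiableAt.comp (g := f) p.1 hf
    (differentiableAt_id.prodMk (differentiableAt_const _))).hasDerivAt

theorem hasDerivAt_pdy (hf : DifferentiableAt ℝ f p) :
    HasDerivAt (fun y => f (p.1, y)) (pdy f p) p.2 :=
  (DifferentiableAt.comp (g := f) p.2 hf
    ((differentiableAt_const _).prodMk differentiableAt_id)).hasDerivAt

theorem pdx_eq_fderiv (hf : DifferentiableAt ℝ f p) : pdx f p = fderiv ℝ f p (1, 0) :=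
  (hf.hasFDerivAt.comp_hasDerivAt (x := p.1) (f := fun x => (x, p.2))
    ((hasDerivAt_id _).prodMk (hasDerivAt_const _ _))).deriv

theorem pdy_eq_fderiv (hf : DifferentiableAt ℝ f p) : pdy f p = fderiv ℝ f p (0, 1) :=
  (hf.hasFDerivAt.comp_hasDerivAt (x := p.2) (f := fun y => (p.1, y))
    ((hasDerivAt_const _ _).prodMk (hasDerivAt_id _))).deriv

theorem pdx_congr (h : f =ᶠ[𝓝 p] g) : pdx f p = pdx g p :=
  (h.comp_tendsto (by simpa using (continuous_id.prodMk continuous_const).tendsto p.1 :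
    Tendsto (fun x : ℝ => (x, p.2)) (𝓝 p.1) (𝓝 p))).deriv_eq

theorem pdy_congr (h : f =ᶠ[𝓝 p] g) : pdy f p = pdy g p :=
  (h.comp_tendsto (by simpa using (continuous_const.prodMk continuous_id).tendsto p.2 :
    Tendsto (fun y : ℝ => (p.1, y)) (𝓝 p.2) (𝓝 p))).deriv_eq

theorem pdx_eventuallyEq_fderiv (hf : ∀ᶠ q in 𝓝 p, DifferentiableAt ℝ f q) :
    pdx f =ᶠ[𝓝 p] fun q => fderiv ℝ f q (1, 0) :=
  hf.mono fun _ => pdx_eq_fderiv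

theorem pdy_eventuallyEq_fderiv (hf : ∀ᶠ q in 𝓝 p, DifferentiableAt ℝ f q) :
    pdy f =ᶠ[𝓝 p] fun q => fderiv ℝ f q (0, 1) :=
  hf.mono fun _ => pdy_eq_fderiv

theorem ContDiffAt.pdx {m n : WithTop ℕ∞} (hf : ContDiffAt ℝ n f p) (hmn : m + 1 ≤ n) :
    ContDiffAt ℝ m (pdx f) p :=
  ((hf.fderiv_right hmn).clm_apply contDiffAt_const).congr_of_eventuallyEq
    (pdx_eventuallyEq_fderiv (hf.eventually_differentiableAt (le_add_self.trans hmn)))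

theorem ContDiffAt.pdy {m n : WithTop ℕ∞} (hf : ContDiffAt ℝ n f p) (hmn : m + 1 ≤ n) :
    ContDiffAt ℝ m (pdy f) p :=
  ((hf.fderiv_right hmn).clm_apply contDiffAt_const).congr_of_eventuallyEq
    (pdy_eventuallyEq_fderiv (hf.eventually_differentiableAt (le_add_self.trans hmn)))

theorem pdx_pdy_eq_fderiv_fderiv (hf : ContDiffAt ℝ 2 f p) :
    pdx (pdy f) p = fderiv ℝ (fderiv ℝ f) p (1, 0) (0, 1) := by
  have hf' : DifferentiableAt ℝ (fderiv ℝ f) p :=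
    (hf.fderiv_right (m := 1) le_rfl).differentiableAt one_ne_zero
  rw [pdx_congr (pdy_eventuallyEq_fderiv (hf.eventually_differentiableAt one_le_two)),
    pdx_eq_fderiv (hf'.clm_apply (differentiableAt_const _)),
    fderiv_clm_apply hf' (differentiableAt_const _)]
  simp

theorem pdy_pdx_eq_fderiv_fderiv (hf : ContDiffAt ℝ 2 f p) :
    pdy (pdx f) p = fderiv ℝ (fderiv ℝ f) p (0, 1) (1, 0) := by
  have hf' : DifferentiableAt ℝ (fderiv ℝ f) p :=
    (hf.fderiv_right (m := 1) le_rfl).differentiableAt one_ne_zero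
  rw [pdy_congr (pdx_eventuallyEq_fderiv (hf.eventually_differentiableAt one_le_two)),
    pdy_eq_fderiv (hf'.clm_apply (differentiableAt_const _)),
    fderiv_clm_apply hf' (differentiableAt_const _)]
  simp

theorem pdx_pdy_eq_pdy_pdx (hf : ContDiffAt ℝ 2 f p) : pdx (pdy f) p = pdy (pdx f) p := by
  rw [pdx_pdy_eq_fderiv_fderiv hf, pdy_pdx_eq_fderiv_fderiv hf, hf.isSymmSndFDerivAt (by simp)]

end PartialDerivatives

namespace LightconeWaveMap

noncomputable def beta₁ (u v : ℝ × ℝ → ℝ) (q : ℝ × ℝ) : ℝ :=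
  pdy u q * pdy v q / (u q + v q)

noncomputable def beta₃ (u v : ℝ × ℝ → ℝ) (q : ℝ × ℝ) : ℝ :=
  pdy (pdy v) q / pdy v q - pdy u q / (u q + v q)

variable {u v : ℝ × ℝ → ℝ} {p : ℝ × ℝ}

theorem pdx_beta₁_eq_zero (hu : ContDiffAt ℝ 2 u p) (hv : ContDiffAt ℝ 2 v p)
    (hsum : u p + v p ≠ 0)
    (hueq : pdx (pdy u) p = pdx u p * pdy u p / (u p + v p))
    (hveq : pdx (pdy v) p = pdx v p * pdy v p / (u p + v p)) :
    pdx (beta₁ u v) p = 0 := by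
  have huy₁ : ContDiffAt ℝ 1 (pdy u) p := hu.pdy le_rfl
  have hvy₁ : ContDiffAt ℝ 1 (pdy v) p := hv.pdy le_rfl
  have hpdx : pdx (beta₁ u v) p = ((pdx (pdy u) p * pdy v p + pdy u p * pdx (pdy v) p)
      * (u p + v p) - pdy u p * pdy v p * (pdx u p + pdx v p)) / (u p + v p) ^ 2 :=
    (((hasDerivAt_pdx (huy₁.differentiableAt one_ne_zero)).mul
      (hasDerivAt_pdx (hvy₁.differentiableAt one_ne_zero))).div
      ((hasDerivAt_pdx (hu.differentiableAt two_ne_zero)).add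
        (hasDerivAt_pdx (hv.differentiableAt two_ne_zero))) hsum).deriv
  rw [hpdx, hueq, hveq]
  field_simp
  ring

theorem pdx_pdy_pdy_eq (hu : DifferentiableAt ℝ u p) (hv : ContDiffAt ℝ 3 v p)
    (hsum : u p + v p ≠ 0)
    (hveq : ∀ᶠ q in 𝓝 p, pdx (pdy v) q = pdx v q * pdy v q / (u q + v q)) :
    pdx (pdy (pdy v)) p = ((pdx (pdy v) p * pdy v p + pdx v p * pdy (pdy v) p) * (u p + v p)
      - pdx v p * pdy v p * (pdy u p + pdy v p)) / (u p + v p) ^ 2 := by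
  have hv₂ : ContDiffAt ℝ 2 v p := hv.of_le (by norm_num)
  have hvx₁ : ContDiffAt ℝ 1 (pdx v) p := hv₂.pdx le_rfl
  have hvy₂ : ContDiffAt ℝ 2 (pdy v) p := hv.pdy (by norm_num)
  calc pdx (pdy (pdy v)) p
      = pdy (pdx (pdy v)) p := pdx_pdy_eq_pdy_pdx hvy₂
    _ = pdy (fun q => pdx v q * pdy v q / (u q + v q)) p := pdy_congr hveq
    _ = ((pdy (pdx v) p * pdy v p + pdx v p * pdy (pdy v) p) * (u p + v p)
          - pdx v p * pdy v p * (pdy u p + pdy v p)) / (u p + v p) ^ 2 :=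
      (((hasDerivAt_pdy (hvx₁.differentiableAt one_ne_zero)).mul
        (hasDerivAt_pdy (hvy₂.differentiableAt two_ne_zero))).div
        ((hasDerivAt_pdy hu).add (hasDerivAt_pdy (hv.differentiableAt three_ne_zero))) hsum).deriv
    _ = _ := by rw [← pdx_pdy_eq_pdy_pdx hv₂]

theorem pdx_beta₃_eq_zero (hu : ContDiffAt ℝ 2 u p) (hv : ContDiffAt ℝ 3 v p)
    (hsum : u p + v p ≠ 0) (hvy : pdy v p ≠ 0)
    (hueq : pdx (pdy u) p = pdx u p * pdy u p / (u p + v p))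
    (hveq : ∀ᶠ q in 𝓝 p, pdx (pdy v) q = pdx v q * pdy v q / (u q + v q)) :
    pdx (beta₃ u v) p = 0 := by
  have huy₁ : ContDiffAt ℝ 1 (pdy u) p := hu.pdy le_rfl
  have hvy₂ : ContDiffAt ℝ 2 (pdy v) p := hv.pdy (by norm_num)
  have hvyy₁ : ContDiffAt ℝ 1 (pdy (pdy v)) p := hvy₂.pdy le_rfl
  have hpdx : pdx (beta₃ u v) p =
      (pdx (pdy (pdy v)) p * pdy v p - pdy (pdy v) p * pdx (pdy v) p) / pdy v p ^ 2
        - (pdx (pdy u) p * (u p + v p) - pdy u p * (pdx u p + pdx v p)) / (u p + v p) ^ 2 :=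
    (((hasDerivAt_pdx (hvyy₁.differentiableAt one_ne_zero)).div
      (hasDerivAt_pdx (hvy₂.differentiableAt two_ne_zero)) hvy).sub
      ((hasDerivAt_pdx (huy₁.differentiableAt one_ne_zero)).div
        ((hasDerivAt_pdx (hu.differentiableAt two_ne_zero)).add
          (hasDerivAt_pdx (hv.differentiableAt three_ne_zero))) hsum)).deriv
  rw [hpdx, pdx_pdy_pdy_eq (hu.differentiableAt two_ne_zero) hv hsum hveq, hueq,
    hveq.self_of_nhds]
  field_simp
  ring

end LightconeWaveMap

open LightconeWaveMap in
/-- for a C³ solution of the lightcone wave map system with `u+v` and `v_y`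
nowhere zero, the functions `β₁ = u_y v_y/(u+v)` and `β₃ = v_{yy}/v_y − u_y/(u+v)` are
first integrals of the `x`-characteristic system: their `x`-partial derivatives vanish. -/
theorem firstIntegrals_x_characteristics
    (Ω : Set (ℝ × ℝ)) (hΩ : IsOpen Ω) (u v : ℝ × ℝ → ℝ)
    (hu : ContDiffOn ℝ 3 u Ω) (hv : ContDiffOn ℝ 3 v Ω)
    (hsum : ∀ p ∈ Ω, u p + v p ≠ 0)
    (hvy : ∀ p ∈ Ω, pdy v p ≠ 0)
    (hueq : ∀ p ∈ Ω, pdx (pdy u) p = pdx u p * pdy u p / (u p + v p))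
    (hveq : ∀ p ∈ Ω, pdx (pdy v) p = pdx v p * pdy v p / (u p + v p)) :
    (∀ p ∈ Ω, pdx (fun q => pdy u q * pdy v q / (u q + v q)) p = 0) ∧
    (∀ p ∈ Ω, pdx (fun q => pdy (pdy v) q / pdy v q - pdy u q / (u q + v q)) p = 0) := by
  refine ⟨fun p hp => ?_, fun p hp => ?_⟩
  · have hΩp : Ω ∈ 𝓝 p := hΩ.mem_nhds hp
    exact pdx_beta₁_eq_zero ((hu.contDiffAt hΩp).of_le (by norm_num))
      ((hv.contDiffAt hΩp).of_le (by norm_num)) (hsum p hp) (hueq p hp) (hveq p hp)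
  · have hΩp : Ω ∈ 𝓝 p := hΩ.mem_nhds hp
    exact pdx_beta₃_eq_zero ((hu.contDiffAt hΩp).of_le (by norm_num)) (hv.contDiffAt hΩp)
      (hsum p hp) (hvy p hp) (hueq p hp) (eventually_of_mem hΩp hveq)
end

section
/- Let a, b, a₁, b₁ ∈ ℝ with a ≠ b, and define u, v : ℝ → ℝ by u(t) = (a²(a₁+b₁)e^{(a−b)t} + ab(b−a)(a₁+b₁)t − a²b₁ − 2ab·a₁ + a₁b²)/(a−b)² and v(t) = (b²(a₁+b₁)e^{−(a−b)t} − ab(b−a)(a₁+b₁)t + a²b₁ − 2ab·b₁ − a₁b²)/(a−b)². Then u and v are smooth on all of ℝ, and at every t ∈ ℝ with u(t) + v(t) ≠ 0 they satisfy the geodesic equations of the Lorentzian metric λ = (du₁² − du₂²)/(2u₁) in lightcone coordinates: u''(t) = u'(t)²/(u(t)+v(t)) and v''(t) = v'(t)²/(u(t)+v(t)). -/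
private lemma expDeriv (c : ℝ) (t : ℝ) :
    HasDerivAt (fun t : ℝ => Real.exp (c * t)) (Real.exp (c * t) * c) t := by
  have h1 : HasDerivAt (fun t : ℝ => c * t) c t := by
    simpa using (hasDerivAt_id t).const_mul c
  exact (Real.hasDerivAt_exp (c * t)).comp t h1

/-- the displayed functions are smooth on all of `ℝ` and satisfy the geodesic
equations `u'' = (u')²/(u+v)`, `v'' = (v')²/(u+v)` of the Lorentzian metric
`λ = (du₁² − du₂²)/(2u₁)` in lightcone coordinates, at every point where `u + v ≠ 0`. -/
theorem geodesics_of_lambda (a b a1 b1 : ℝ) (hab : a ≠ b) (u v : ℝ → ℝ)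
    (hu : u = fun t =>
      (a ^ 2 * (a1 + b1) * Real.exp ((a - b) * t) + a * b * (b - a) * (a1 + b1) * t
        - a ^ 2 * b1 - 2 * a * b * a1 + a1 * b ^ 2) / (a - b) ^ 2)
    (hv : v = fun t =>
      (b ^ 2 * (a1 + b1) * Real.exp (-(a - b) * t) - a * b * (b - a) * (a1 + b1) * t
        + a ^ 2 * b1 - 2 * a * b * b1 - a1 * b ^ 2) / (a - b) ^ 2) :
    ContDiff ℝ (⊤ : ℕ∞) u ∧ ContDiff ℝ (⊤ : ℕ∞) v ∧
    ∀ t : ℝ, u t + v t ≠ 0 →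
      deriv (deriv u) t = (deriv u t) ^ 2 / (u t + v t) ∧
      deriv (deriv v) t = (deriv v t) ^ 2 / (u t + v t) := by
  have hc : a - b ≠ 0 := sub_ne_zero.mpr hab
  have hdu : ∀ t : ℝ, HasDerivAt u
      ((a ^ 2 * (a1 + b1) * (Real.exp ((a - b) * t) * (a - b))
        + a * b * (b - a) * (a1 + b1)) / (a - b) ^ 2) t := by
    intro t
    rw [hu]
    have h1 : HasDerivAt (fun t : ℝ => a * b * (b - a) * (a1 + b1) * t)
        (a * b * (b - a) * (a1 + b1)) t := by
      simpa using (hasDerivAt_id t).const_mul (a * b * (b - a) * (a1 + b1))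
    exact (((((expDeriv (a - b) t).const_mul (a ^ 2 * (a1 + b1))).add h1).sub_const
      (a ^ 2 * b1)).sub_const (2 * a * b * a1)).add_const (a1 * b ^ 2) |>.div_const _
  have hdv : ∀ t : ℝ, HasDerivAt v
      ((b ^ 2 * (a1 + b1) * (Real.exp (-(a - b) * t) * (-(a - b)))
        - a * b * (b - a) * (a1 + b1)) / (a - b) ^ 2) t := by
    intro t
    rw [hv]
    have h1 : HasDerivAt (fun t : ℝ => a * b * (b - a) * (a1 + b1) * t)
        (a * b * (b - a) * (a1 + b1)) t := by
      simpa using (hasDerivAt_id t).const_mul (a * b * (b - a) * (a1 + b1))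
    exact (((((expDeriv (-(a - b)) t).const_mul (b ^ 2 * (a1 + b1))).sub h1).add_const
      (a ^ 2 * b1)).sub_const (2 * a * b * b1)).sub_const (a1 * b ^ 2) |>.div_const _
  have hdu1 : deriv u = fun t =>
      (a ^ 2 * (a1 + b1) * (Real.exp ((a - b) * t) * (a - b))
        + a * b * (b - a) * (a1 + b1)) / (a - b) ^ 2 := funext fun t => (hdu t).deriv
  have hdv1 : deriv v = fun t =>
      (b ^ 2 * (a1 + b1) * (Real.exp (-(a - b) * t) * (-(a - b)))
        - a * b * (b - a) * (a1 + b1)) / (a - b) ^ 2 := funext fun t => (hdv t).deriv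
  have hdu2 : ∀ t : ℝ, deriv (deriv u) t =
      a ^ 2 * (a1 + b1) * (Real.exp ((a - b) * t) * (a - b) * (a - b)) / (a - b) ^ 2 := by
    intro t
    rw [hdu1]
    exact HasDerivAt.deriv <| by
      exact ((((expDeriv (a - b) t).mul_const (a - b)).const_mul
        (a ^ 2 * (a1 + b1))).add_const _).div_const _
  have hdv2 : ∀ t : ℝ, deriv (deriv v) t =
      b ^ 2 * (a1 + b1) * (Real.exp (-(a - b) * t) * (-(a - b)) * (-(a - b))) / (a - b) ^ 2 := by
    intro t
    rw [hdv1]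
    exact HasDerivAt.deriv <| by
      exact ((((expDeriv (-(a - b)) t).mul_const (-(a - b))).const_mul
        (b ^ 2 * (a1 + b1))).sub_const _).div_const _
  refine ⟨by rw [hu]; exact ContDiff.div_const (by fun_prop) _, by rw [hv]; exact ContDiff.div_const (by fun_prop) _, fun t ht => ?_⟩
  have hE : Real.exp ((a - b) * t) ≠ 0 := Real.exp_ne_zero _
  have hneg : Real.exp (-(a - b) * t) = (Real.exp ((a - b) * t))⁻¹ := by
    rw [← Real.exp_neg]; ring_nf
  constructor
  · rw [hdu2, hdu1, eq_div_iff ht, hu, hv]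
    simp only [hneg]
    field_simp
    ring
  · rw [hdv2, hdv1, eq_div_iff ht, hu, hv]
    simp only [hneg]
    field_simp
    ring
end

section
/- Let φ : ℝ² → ℝ² be the map φ(r,θ) = (e^{−r/2}cos(θ/2), e^{−r/2}sin(θ/2)). Then for every point (r,θ) ∈ ℝ² and every tangent vector (α,β) ∈ ℝ², writing (A,B) = Dφ(r,θ)(α,β) for the image of (α,β) under the Fréchet derivative of φ and (u,v) = φ(r,θ), one has (A² + B²)/(1 + u² + v²) = (1/4)(α² + β²)/(1 + e^{r}). That is, φ pulls back the Ricci soliton (Witten black hole) metric g_Σ = (du² + dv²)/(1 + u² + v²) to the metric g₃ = (1/4)(dr² + dθ²)/(1 + e^{r}). -/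
/-!
Write `φ` in polar form `φ = ρ (cos ψ, sin ψ)` with `ρ = e^{-r/2}` and `ψ = θ/2`. For any
such map `|Dφ w|² = (Dρ w)² + ρ² (Dψ w)²`, which here is `e^{-r} (α² + β²) / 4`, while
`|φ|² = ρ² = e^{-r}`; the claim reduces to `e^{-r} / (1 + e^{-r}) = 1 / (1 + e^r)`.
-/

open Real

theorem fderiv_polar_sq_add_sq {E : Type*} [NormedAddCommGroup E] [NormedSpace ℝ E]
    {ρ ψ : E → ℝ} {ρ' ψ' : E →L[ℝ] ℝ} {x : E}
    (hρ : HasFDerivAt ρ ρ' x) (hψ : HasFDerivAt ψ ψ' x) (w : E) :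
    (fderiv ℝ (fun y => (ρ y * cos (ψ y), ρ y * sin (ψ y))) x w).1 ^ 2
        + (fderiv ℝ (fun y => (ρ y * cos (ψ y), ρ y * sin (ψ y))) x w).2 ^ 2
      = ρ' w ^ 2 + ρ x ^ 2 * ψ' w ^ 2 := by
  rw [((hρ.fun_mul hψ.cos).prodMk (hρ.fun_mul hψ.sin)).fderiv]
  simp only [ContinuousLinearMap.prod_apply, add_apply, smul_apply, smul_eq_mul]
  linear_combination (ρ' w ^ 2 + ρ x ^ 2 * ψ' w ^ 2) * sin_sq_add_cos_sq (ψ x)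

theorem polar_sq_add_sq (ρ ψ : ℝ) : (ρ * cos ψ) ^ 2 + (ρ * sin ψ) ^ 2 = ρ ^ 2 := by
  linear_combination ρ ^ 2 * sin_sq_add_cos_sq ψ

theorem exp_neg_half_sq (r : ℝ) : exp (-r / 2) ^ 2 = exp (-r) := by
  rw [← exp_nat_mul]; ring_nf

theorem exp_neg_mul_div_one_add_exp_neg (r c : ℝ) :
    exp (-r) * c / (1 + exp (-r)) = c / (1 + exp r) := by
  rw [exp_neg]
  field_simp
  ring

/-- the map `φ(r,θ) = (e^{−r/2}cos(θ/2), e^{−r/2}sin(θ/2))` pulls back the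
Ricci soliton (Witten black hole) metric `g_Σ = (du² + dv²)/(1 + u² + v²)` to the metric
`g₃ = (1/4)(dr² + dθ²)/(1 + e^r)`. -/
theorem pullback_soliton_to_g3 (φ : ℝ × ℝ → ℝ × ℝ)
    (hφ : φ = fun p =>
      (Real.exp (-p.1 / 2) * Real.cos (p.2 / 2), Real.exp (-p.1 / 2) * Real.sin (p.2 / 2))) :
    ∀ p : ℝ × ℝ, ∀ w : ℝ × ℝ,
      ((fderiv ℝ φ p w).1 ^ 2 + (fderiv ℝ φ p w).2 ^ 2) / (1 + (φ p).1 ^ 2 + (φ p).2 ^ 2)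
        = (1 / 4) * (w.1 ^ 2 + w.2 ^ 2) / (1 + Real.exp p.1) := by
  rintro ⟨r, θ⟩ ⟨α, β⟩
  subst hφ
  have hρ : HasFDerivAt (fun p : ℝ × ℝ => exp (-p.1 / 2))
      ((exp (-r / 2) * (-1 / 2)) • ContinuousLinearMap.fst ℝ ℝ ℝ) (r, θ) :=
    HasDerivAt.comp_hasFDerivAt (h₂ := fun x => exp (-x / 2)) (r, θ)
      ((hasDerivAt_neg r).div_const 2).exp hasFDerivAt_fst
  have hψ : HasFDerivAt (fun p : ℝ × ℝ => p.2 / 2)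
      ((1 / 2 : ℝ) • ContinuousLinearMap.snd ℝ ℝ ℝ) (r, θ) :=
    HasDerivAt.comp_hasFDerivAt (h₂ := fun x => x / 2) (r, θ)
      ((hasDerivAt_id θ).div_const 2) hasFDerivAt_snd
  rw [fderiv_polar_sq_add_sq hρ hψ, add_assoc, polar_sq_add_sq]
  simp only [smul_apply, ContinuousLinearMap.coe_fst',
    ContinuousLinearMap.coe_snd', smul_eq_mul]
  have hnum : (exp (-r / 2) * (-1 / 2) * α) ^ 2 + exp (-r / 2) ^ 2 * (1 / 2 * β) ^ 2
      = exp (-r) * (1 / 4 * (α ^ 2 + β ^ 2)) := by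
    rw [← exp_neg_half_sq]; ring
  rw [hnum, exp_neg_half_sq, exp_neg_mul_div_one_add_exp_neg, mul_div_assoc]
end

section
/- Define, for x > −1 and y > −1, u(x,y) = −(−y√(1+x) − √(1+y) + x√(1+y) − √(1+x) + (1+y)^{3/2})/√(1+y) and v(x,y) = −(4√(1+y) − 4√(1+x) + y√(1+y) − 4y√(1+x) + x√(1+y))/√(1+y). Then (u,v) satisfies the lightcone wave map system u_{xy} = u_x u_y/(u+v), v_{xy} = v_x v_y/(u+v) at every point (x,y) with x > −1, y > −1 and u(x,y) + v(x,y) ≠ 0; moreover it satisfies the Cauchy data along the diagonal y = x: for every x > −1, u(x,x) = 1 − x, v(x,x) = 2x, and the normal derivatives vanish: (∂u/∂x − ∂u/∂y)(x,x) = 0 and (∂v/∂x − ∂v/∂y)(x,x) = 0. -/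
/-- The explicit solution `u` of Example 4.1. -/
noncomputable def uEx : ℝ × ℝ → ℝ := fun p =>
  -((-p.2 * Real.sqrt (1 + p.1) - Real.sqrt (1 + p.2) + p.1 * Real.sqrt (1 + p.2)
      - Real.sqrt (1 + p.1) + (1 + p.2) ^ ((3 : ℝ) / 2)) / Real.sqrt (1 + p.2))

/-- The explicit solution `v` of Example 4.1. -/
noncomputable def vEx : ℝ × ℝ → ℝ := fun p =>
  -((4 * Real.sqrt (1 + p.2) - 4 * Real.sqrt (1 + p.1) + p.2 * Real.sqrt (1 + p.2)
      - 4 * p.2 * Real.sqrt (1 + p.1) + p.1 * Real.sqrt (1 + p.2)) / Real.sqrt (1 + p.2))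

/-!
On the half-plane `y > -1`, with `s = √(1 + x)` and `t = √(1 + y)`, the example simplifies
to `u = s t − x − y` and `v = 4 s t − 4 − x − y`. A function `a φ(x) ψ(y) + (affine)` has
mixed derivative `a φ'(x) ψ'(y)`, and `s' = 1 / (2s)`, `t' = 1 / (2t)`. Since `s² = 1 + x`
and `t² = 1 + y`, `u + v = 5st − 2s² − 2t²`, and the equation for the function with
`st`-coefficient `a` reduces to `a² − 5a + 4 = 0`, which holds for `a = 1` and `a = 4`.
On the diagonal `s = t`, giving the Cauchy data, and the normal derivatives vanish because
both functions are symmetric in `x, y`.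
-/

open Set Filter Topology

namespace Set.EqOn

variable {f g : ℝ × ℝ → ℝ} {U : Set (ℝ × ℝ)}

theorem pdx (h : EqOn f g U) (hU : IsOpen U) : EqOn (pdx f) (pdx g) U := fun p hp => by
  have hline : ∀ᶠ x in 𝓝 p.1, (x, p.2) ∈ U :=
    (continuous_id.prodMk continuous_const).continuousAt.preimage_mem_nhds (hU.mem_nhds hp)
  exact EventuallyEq.deriv_eq (hline.mono fun x hx => h hx)

theorem pdy (h : EqOn f g U) (hU : IsOpen U) : EqOn (pdy f) (pdy g) U := fun p hp => by
  have hline : ∀ᶠ y in 𝓝 p.2, (p.1, y) ∈ U :=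
    (continuous_const.prodMk continuous_id).continuousAt.preimage_mem_nhds (hU.mem_nhds hp)
  exact EventuallyEq.deriv_eq (hline.mono fun y hy => h hy)

end Set.EqOn

noncomputable def prodAffine (a b c d : ℝ) (φ ψ : ℝ → ℝ) : ℝ × ℝ → ℝ :=
  fun p => a * (φ p.1 * ψ p.2) + b + c * p.1 + d * p.2

section prodAffine

variable {a b c d : ℝ} {φ ψ : ℝ → ℝ} {p : ℝ × ℝ}

theorem pdx_prodAffine (hφ : DifferentiableAt ℝ φ p.1) :
    pdx (prodAffine a b c d φ ψ) p = a * (deriv φ p.1 * ψ p.2) + c := by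
  have h : HasDerivAt (fun x => prodAffine a b c d φ ψ (x, p.2))
      (a * (deriv φ p.1 * ψ p.2) + c * 1) p.1 :=
    ((((hφ.hasDerivAt.mul_const (ψ p.2)).const_mul a).add_const b).add
      ((hasDerivAt_id p.1).const_mul c)).add_const (d * p.2)
  rw [pdx, h.deriv, mul_one]

theorem pdy_prodAffine (hψ : DifferentiableAt ℝ ψ p.2) :
    pdy (prodAffine a b c d φ ψ) p = a * (φ p.1 * deriv ψ p.2) + d := by
  have h : HasDerivAt (fun y => prodAffine a b c d φ ψ (p.1, y))
      (a * (φ p.1 * deriv ψ p.2) + d * 1) p.2 :=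
    ((((hψ.hasDerivAt.const_mul (φ p.1)).const_mul a).add_const b).add_const (c * p.1)).add
      ((hasDerivAt_id p.2).const_mul d)
  rw [pdy, h.deriv, mul_one]

theorem pdx_pdy_prodAffine (hφ : DifferentiableAt ℝ φ p.1) (hψ : DifferentiableAt ℝ ψ p.2) :
    pdx (pdy (prodAffine a b c d φ ψ)) p = a * (deriv φ p.1 * deriv ψ p.2) := by
  have hline : (fun x => pdy (prodAffine a b c d φ ψ) (x, p.2)) =
      fun x => a * (φ x * deriv ψ p.2) + d :=
    funext fun x => pdy_prodAffine (p := (x, p.2)) hψ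
  have h := ((hφ.hasDerivAt.mul_const (deriv ψ p.2)).const_mul a).add_const d
  rw [pdx, hline, h.deriv]

theorem pdx_prodAffine_diag {x : ℝ} (hφ : DifferentiableAt ℝ φ x) :
    pdx (prodAffine a b c c φ φ) (x, x) = pdy (prodAffine a b c c φ φ) (x, x) := by
  rw [pdx_prodAffine hφ, pdy_prodAffine hφ, mul_comm (deriv φ x)]

end prodAffine

theorem hasDerivAt_sqrt_one_add {x : ℝ} (hx : -1 < x) :
    HasDerivAt (fun t => √(1 + t)) (1 / (2 * √(1 + x))) x := by
  simpa using ((hasDerivAt_id' x).const_add 1).sqrt (by linarith)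

noncomputable def uSqrt : ℝ × ℝ → ℝ :=
  prodAffine 1 0 (-1) (-1) (fun t => √(1 + t)) fun t => √(1 + t)

noncomputable def vSqrt : ℝ × ℝ → ℝ :=
  prodAffine 4 (-4) (-1) (-1) (fun t => √(1 + t)) fun t => √(1 + t)

theorem uEx_eqOn_uSqrt : EqOn uEx uSqrt {p | -1 < p.2} := fun p (hy : -1 < p.2) => by
  have h0 : 0 < 1 + p.2 := by linarith
  have hsq : √(1 + p.2) * √(1 + p.2) = 1 + p.2 := Real.mul_self_sqrt h0.le
  have h32 : (1 + p.2) ^ ((3 : ℝ) / 2) = (1 + p.2) * √(1 + p.2) := by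
    rw [show (3 : ℝ) / 2 = 1 + 1 / 2 by norm_num, Real.rpow_add h0, Real.rpow_one,
      ← Real.sqrt_eq_rpow]
  have ht0 : √(1 + p.2) ≠ 0 := (Real.sqrt_pos.2 h0).ne'
  simp only [uEx, uSqrt, prodAffine, h32]
  field_simp
  linear_combination (-√(1 + p.1)) * hsq

theorem vEx_eqOn_vSqrt : EqOn vEx vSqrt {p | -1 < p.2} := fun p (hy : -1 < p.2) => by
  have h0 : 0 < 1 + p.2 := by linarith
  have hsq : √(1 + p.2) * √(1 + p.2) = 1 + p.2 := Real.mul_self_sqrt h0.le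
  have ht0 : √(1 + p.2) ≠ 0 := (Real.sqrt_pos.2 h0).ne'
  simp only [vEx, vSqrt, prodAffine]
  field_simp
  linear_combination (-4 * √(1 + p.1)) * hsq

theorem uSqrt_vSqrt_wave_map {x y : ℝ} (hx : -1 < x) (hy : -1 < y)
    (huv : uSqrt (x, y) + vSqrt (x, y) ≠ 0) :
    pdx (pdy uSqrt) (x, y) =
        pdx uSqrt (x, y) * pdy uSqrt (x, y) / (uSqrt (x, y) + vSqrt (x, y)) ∧
      pdx (pdy vSqrt) (x, y) =
        pdx vSqrt (x, y) * pdy vSqrt (x, y) / (uSqrt (x, y) + vSqrt (x, y)) := by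
  have hdx := hasDerivAt_sqrt_one_add hx
  have hdy := hasDerivAt_sqrt_one_add hy
  simp only [uSqrt, vSqrt, pdx_pdy_prodAffine (p := (x, y)) hdx.differentiableAt
    hdy.differentiableAt, pdx_prodAffine (p := (x, y)) hdx.differentiableAt,
    pdy_prodAffine (p := (x, y)) hdy.differentiableAt, hdx.deriv, hdy.deriv, prodAffine]
    at huv ⊢
  have hs : √(1 + x) ^ 2 = 1 + x := Real.sq_sqrt (by linarith)
  have ht : √(1 + y) ^ 2 = 1 + y := Real.sq_sqrt (by linarith)
  have hs0 : √(1 + x) ≠ 0 := (Real.sqrt_pos.2 (by linarith)).ne'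
  have ht0 : √(1 + y) ≠ 0 := (Real.sqrt_pos.2 (by linarith)).ne'
  generalize √(1 + x) = s at *
  generalize √(1 + y) = t at *
  obtain rfl : x = s ^ 2 - 1 := by linarith
  obtain rfl : y = t ^ 2 - 1 := by linarith
  constructor <;> (rw [eq_div_iff huv]; field_simp; ring)

/-- the explicit pair `(uEx, vEx)` solves the lightcone wave map system
for `x, y > −1` wherever `u + v ≠ 0`, and satisfies the Cauchy data of Example 4.1
along the diagonal `y = x`: `u = 1 − x`, `v = 2x`, with vanishing normal derivatives. -/
theorem example41_solution :
    (∀ p : ℝ × ℝ, -1 < p.1 → -1 < p.2 → uEx p + vEx p ≠ 0 →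
      pdx (pdy uEx) p = pdx uEx p * pdy uEx p / (uEx p + vEx p) ∧
      pdx (pdy vEx) p = pdx vEx p * pdy vEx p / (uEx p + vEx p)) ∧
    (∀ x : ℝ, -1 < x →
      uEx (x, x) = 1 - x ∧ vEx (x, x) = 2 * x ∧
      pdx uEx (x, x) - pdy uEx (x, x) = 0 ∧
      pdx vEx (x, x) - pdy vEx (x, x) = 0) := by
  have hU : IsOpen {p : ℝ × ℝ | -1 < p.2} := isOpen_lt continuous_const continuous_snd
  have hu := uEx_eqOn_uSqrt
  have hv := vEx_eqOn_vSqrt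
  refine ⟨fun ⟨x, y⟩ hx hy huv => ?_, fun x hx => ?_⟩
  · have hp : (x, y) ∈ {p : ℝ × ℝ | -1 < p.2} := hy
    rw [hu hp, hv hp] at huv
    rw [(hu.pdy hU).pdx hU hp, (hv.pdy hU).pdx hU hp, hu.pdx hU hp, hu.pdy hU hp,
      hv.pdx hU hp, hv.pdy hU hp, hu hp, hv hp]
    exact uSqrt_vSqrt_wave_map hx hy huv
  · have hp : (x, x) ∈ {p : ℝ × ℝ | -1 < p.2} := hx
    have hdx := (hasDerivAt_sqrt_one_add hx).differentiableAt
    have hsq : √(1 + x) * √(1 + x) = 1 + x := Real.mul_self_sqrt (by linarith)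
    rw [hu hp, hv hp, hu.pdx hU hp, hu.pdy hU hp, hv.pdx hU hp, hv.pdy hU hp, uSqrt, vSqrt,
      pdx_prodAffine_diag hdx, pdx_prodAffine_diag hdx]
    refine ⟨?_, ?_, sub_self _, sub_self _⟩ <;> simp only [prodAffine, hsq] <;> ring
end
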